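/- arXiv:2203.06621 — 4 statements merged into one kernel-verified Lean document; each statement's English description precedes it below -/
import Mathlib

section
/- Let R be a (possibly noncommutative) unital ring, let d : R → R be a derivation with d(Λ) = 0, let U be a unit of R, let φ ∈ R, and let N, k be positive integers. If Λ^N · U = U · φ and d(U) = Λ^k · U, then d(φ) = 0. -/
/-- Let `R` be a (possibly noncommutative) unital ring, `d : R → R` a
derivation with `d Λ = 0`, `U` a unit of `R`, `φ ∈ R`, and `N, k` positive integers.
If `Λ^N * U = U * φ` and `d U = Λ^k * U`, then `d φ = 0`. -/
theorem extended_lattice_GD_t_flow_phi_stationary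
    {R : Type*} [Ring R] (d : R → R)
    (hd_add : ∀ a b : R, d (a + b) = d a + d b)
    (hd_mul : ∀ a b : R, d (a * b) = d a * b + a * d b)
    (Λ : R) (hdΛ : d Λ = 0)
    (U : Rˣ) (φ : R) (N k : ℕ) (hN : 0 < N) (hk : 0 < k)
    (halg : Λ ^ N * (U : R) = (U : R) * φ)
    (hdU : d (U : R) = Λ ^ k * (U : R)) :
    d φ = 0 := by
  have hd1 : d 1 = 0 := by
    have := hd_mul 1 1
    simpa using this
  have hpow : ∀ n : ℕ, d (Λ ^ n) = 0 := by
    intro n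
    induction n with
    | zero => simpa using hd1
    | succ m ih =>
      rw [pow_succ, hd_mul, ih, hdΛ, zero_mul, mul_zero, add_zero]
  -- differentiate halg
  have h1 : d (Λ ^ N * (U : R)) = Λ ^ k * ((U : R) * φ) := by
    rw [hd_mul, hpow, zero_mul, zero_add, hdU, ← mul_assoc, ← pow_add,
      add_comm N k, pow_add, mul_assoc, halg]
  have h2 : d ((U : R) * φ) = Λ ^ k * ((U : R) * φ) + (U : R) * d φ := by
    rw [hd_mul, hdU, mul_assoc]
  have h3 : (U : R) * d φ = 0 := by
    have := halg ▸ h1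
    rw [h2] at this
    exact add_eq_left.mp this
  have := congrArg (fun x => (↑U⁻¹ : R) * x) h3
  simpa [← mul_assoc] using this
end

section
/- Let R be a (possibly noncommutative) unital ring, let d and δ be derivations on R with d(Λ) = 0 and δ(Λ) = 0, let U be a unit of R, let φ ∈ R, and let N, k be positive integers. If Λ^N · U = U · φ and d(U) = Λ^{kN} · δ(U), then d(φ) = φ^k · δ(φ). -/
/-- Let `R` be a (possibly noncommutative) unital ring, `d` and `δ`
derivations on `R` with `d Λ = 0` and `δ Λ = 0`, `U` a unit of `R`, `φ ∈ R`, and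
`N, k` positive integers.  If `Λ^N * U = U * φ` and `d U = Λ^(k*N) * δ U`, then
`d φ = φ^k * δ φ`. -/
theorem extended_lattice_GD_x_flow_phi_evolution
    {R : Type*} [Ring R] (d δ : R → R)
    (hd_add : ∀ a b : R, d (a + b) = d a + d b)
    (hd_mul : ∀ a b : R, d (a * b) = d a * b + a * d b)
    (hδ_add : ∀ a b : R, δ (a + b) = δ a + δ b)
    (hδ_mul : ∀ a b : R, δ (a * b) = δ a * b + a * δ b)
    (Λ : R) (hdΛ : d Λ = 0) (hδΛ : δ Λ = 0)
    (U : Rˣ) (φ : R) (N k : ℕ) (hN : 0 < N) (hk : 0 < k)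
    (halg : Λ ^ N * (U : R) = (U : R) * φ)
    (hdU : d (U : R) = Λ ^ (k * N) * δ (U : R)) :
    d φ = φ ^ k * δ φ := by
  set a : R := (U : R) with ha
  set b : R := ((U⁻¹ : Rˣ) : R) with hb
  have hba : b * a = 1 := U.inv_mul
  have hab : a * b = 1 := U.mul_inv
  have hd1 : d 1 = 0 := by
    have h := hd_mul 1 1
    simp only [one_mul, mul_one] at h
    exact (add_left_cancel (a := d 1) (by rw [add_zero]; exact h)).symm
  have hδ1 : δ 1 = 0 := by
    have h := hδ_mul 1 1
    simp only [one_mul, mul_one] at h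
    exact (add_left_cancel (a := δ 1) (by rw [add_zero]; exact h)).symm
  have hdpow : ∀ n : ℕ, d (Λ ^ n) = 0 := by
    intro n
    induction n with
    | zero => simpa using hd1
    | succ n ih => rw [pow_succ, hd_mul, ih, hdΛ]; simp
  have hδpow : ∀ n : ℕ, δ (Λ ^ n) = 0 := by
    intro n
    induction n with
    | zero => simpa using hδ1
    | succ n ih => rw [pow_succ, hδ_mul, ih, hδΛ]; simp
  have hdb : d b = -(b * d a * b) := by
    have h := hd_mul b a
    rw [hba, hd1] at h
    have h1 : d b * a = -(b * d a) := eq_neg_of_add_eq_zero_left h.symm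
    calc d b = d b * (a * b) := by rw [hab, mul_one]
      _ = (d b * a) * b := by rw [mul_assoc]
      _ = -(b * d a * b) := by rw [h1]; noncomm_ring
  have hδb : δ b = -(b * δ a * b) := by
    have h := hδ_mul b a
    rw [hba, hδ1] at h
    have h1 : δ b * a = -(b * δ a) := eq_neg_of_add_eq_zero_left h.symm
    calc δ b = δ b * (a * b) := by rw [hab, mul_one]
      _ = (δ b * a) * b := by rw [mul_assoc]
      _ = -(b * δ a * b) := by rw [h1]; noncomm_ring
  have hφ : b * Λ ^ N * a = φ := by
    rw [mul_assoc, halg, ← mul_assoc, hba, one_mul]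
  have hφk : ∀ m : ℕ, φ ^ m = b * Λ ^ (m * N) * a := by
    intro m
    induction m with
    | zero => simp [hba]
    | succ m ih =>
      rw [pow_succ, ih, ← hφ]
      calc b * Λ ^ (m * N) * a * (b * Λ ^ N * a)
          = b * Λ ^ (m * N) * (a * b) * Λ ^ N * a := by noncomm_ring
        _ = b * (Λ ^ (m * N) * Λ ^ N) * a := by rw [hab]; noncomm_ring
        _ = b * Λ ^ ((m + 1) * N) * a := by rw [← pow_add, add_mul, one_mul]
  have hdφ : d φ = -(b * d a * b) * Λ ^ N * a + b * Λ ^ N * d a := by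
    rw [← hφ, hd_mul, hd_mul, hdpow N, hdb]
    noncomm_ring
  have hδφ : δ φ = -(b * δ a * b) * Λ ^ N * a + b * Λ ^ N * δ a := by
    rw [← hφ, hδ_mul, hδ_mul, hδpow N, hδb]
    noncomm_ring
  rw [hdφ, hδφ, hφk k, hdU]
  have hpowcomm : Λ ^ N * Λ ^ (k * N) = Λ ^ (k * N) * Λ ^ N := by
    rw [← pow_add, ← pow_add, add_comm]
  have hcancel : ∀ x y : R, b * x * a * (b * y) = b * (x * y) := by
    intro x y
    calc b * x * a * (b * y) = b * x * (a * b) * y := by noncomm_ring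
      _ = b * (x * y) := by rw [hab]; noncomm_ring
  calc -(b * (Λ ^ (k * N) * δ a) * b) * Λ ^ N * a + b * Λ ^ N * (Λ ^ (k * N) * δ a)
      = -(b * (Λ ^ (k * N) * (δ a * b * (Λ ^ N * a)))) + b * (Λ ^ N * Λ ^ (k * N)) * δ a := by
        noncomm_ring
    _ = -(b * Λ ^ (k * N) * a * (b * (δ a * b * (Λ ^ N * a)))) + b * (Λ ^ (k * N) * Λ ^ N) * δ a := by
        rw [hcancel, hpowcomm]
    _ = -(b * Λ ^ (k * N) * a * (b * (δ a * b * (Λ ^ N * a)))) + b * Λ ^ (k * N) * a * (b * (Λ ^ N * δ a)) := by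
        rw [hcancel (Λ ^ (k * N)) (Λ ^ N * δ a)]; noncomm_ring
    _ = b * Λ ^ (k * N) * a * (-(b * δ a * b) * Λ ^ N * a + b * Λ ^ N * δ a) := by
        noncomm_ring
end

section
/- Let R be a (possibly noncommutative) unital ring, let d and δ be derivations on R, let Λ ∈ R, let W and W̄ be units of R, and let N, k be positive integers. If d(W^{-1}·W̄) = Λ^{kN} · δ(W^{-1}·W̄), then d(W̄)·W̄^{-1} − d(W)·W^{-1} = (W·Λ^N·W^{-1})^k · ( δ(W̄)·W̄^{-1} − δ(W)·W^{-1} ). -/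
lemma sato_aux {R : Type*} [Ring R] (d : R → R)
    (hd_mul : ∀ a b : R, d (a * b) = d a * b + a * d b)
    (W Wbar : Rˣ) :
    (W : R) * d ((↑W⁻¹ : R) * (Wbar : R)) * (↑Wbar⁻¹ : R)
      = d (Wbar : R) * (↑Wbar⁻¹ : R) - d (W : R) * (↑W⁻¹ : R) := by
  have hd1 : d 1 = 0 := by
    have h := hd_mul 1 1
    simp only [mul_one, one_mul] at h
    have := left_eq_add.mp h
    exact this
  have h2 : d (↑W⁻¹ : R) * (W : R) + (↑W⁻¹ : R) * d (W : R) = 0 := by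
    have := hd_mul (↑W⁻¹ : R) (W : R)
    rw [Units.inv_mul, hd1] at this
    exact this.symm
  have hinv : d (↑W⁻¹ : R) = -((↑W⁻¹ : R) * d (W : R) * (↑W⁻¹ : R)) := by
    have h3 : d (↑W⁻¹ : R) * (W : R) = -((↑W⁻¹ : R) * d (W : R)) :=
      eq_neg_of_add_eq_zero_left h2
    calc d (↑W⁻¹ : R) = d (↑W⁻¹ : R) * ((W : R) * (↑W⁻¹ : R)) := by
          rw [Units.mul_inv, mul_one]
      _ = (d (↑W⁻¹ : R) * (W : R)) * (↑W⁻¹ : R) := by rw [mul_assoc]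
      _ = -((↑W⁻¹ : R) * d (W : R) * (↑W⁻¹ : R)) := by rw [h3]; noncomm_ring
  rw [hd_mul, hinv]
  simp only [mul_add, add_mul, neg_mul, mul_neg, mul_assoc,
    Units.mul_inv_cancel_left, Units.inv_mul_cancel_left, Units.mul_inv, mul_one]
  abel

/-- Let `R` be a (possibly noncommutative) unital ring, `d` and `δ`
derivations on `R`, `Λ ∈ R`, `W` and `W̄` units of `R`, `N, k` positive integers.
If `d (W⁻¹ * W̄) = Λ^(k*N) * δ (W⁻¹ * W̄)`, then
`d W̄ * W̄⁻¹ − d W * W⁻¹ = (W * Λ^N * W⁻¹)^k * (δ W̄ * W̄⁻¹ − δ W * W⁻¹)`. -/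
theorem extended_lattice_GD_x_flow_Sato_identity
    {R : Type*} [Ring R] (d δ : R → R)
    (hd_add : ∀ a b : R, d (a + b) = d a + d b)
    (hd_mul : ∀ a b : R, d (a * b) = d a * b + a * d b)
    (hδ_add : ∀ a b : R, δ (a + b) = δ a + δ b)
    (hδ_mul : ∀ a b : R, δ (a * b) = δ a * b + a * δ b)
    (Λ : R) (W Wbar : Rˣ) (N k : ℕ) (hN : 0 < N) (hk : 0 < k)
    (hdU : d ((↑W⁻¹ : R) * (Wbar : R))
      = Λ ^ (k * N) * δ ((↑W⁻¹ : R) * (Wbar : R))) :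
    d (Wbar : R) * (↑Wbar⁻¹ : R) - d (W : R) * (↑W⁻¹ : R)
      = ((W : R) * Λ ^ N * (↑W⁻¹ : R)) ^ k
        * (δ (Wbar : R) * (↑Wbar⁻¹ : R) - δ (W : R) * (↑W⁻¹ : R)) := by
  have hconj : ((W : R) * Λ ^ N * (↑W⁻¹ : R)) ^ k
      = (W : R) * Λ ^ (k * N) * (↑W⁻¹ : R) := by
    rw [pow_mul', Units.conj_pow]
  rw [← sato_aux d hd_mul W Wbar, ← sato_aux δ hδ_mul W Wbar, hdU, hconj]
  simp only [mul_assoc, Units.inv_mul_cancel_left]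
end

section
/- Let R be a (possibly noncommutative) unital ring, let d and δ be derivations on R, let Λ, P ∈ R, let W and W̄ be units of R, and let N, k be positive integers. If d(W) = (W·Λ^{kN}·W^{-1})·δ(W) + P·W and d(W̄) = (W·Λ^{kN}·W^{-1})·δ(W̄) + P·W̄, then d(W^{-1}·W̄) = Λ^{kN}·δ(W^{-1}·W̄). -/
lemma deriv_one' {R : Type*} [Ring R] (d : R → R)
    (hd_mul : ∀ a b : R, d (a * b) = d a * b + a * d b) : d 1 = 0 := by
  have h := hd_mul 1 1
  simp only [mul_one, one_mul] at h
  have : d 1 + d 1 = d 1 + 0 := by rw [add_zero]; exact h.symm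
  exact (add_left_cancel this)

lemma myDerivInv {R : Type*} [Ring R] (d : R → R)
    (hd_mul : ∀ a b : R, d (a * b) = d a * b + a * d b) (W : Rˣ) :
    d (↑W⁻¹ : R) = -((↑W⁻¹ : R) * d (W : R) * (↑W⁻¹ : R)) := by
  have h0 : d ((W : R) * (↑W⁻¹ : R)) = 0 := by
    rw [Units.mul_inv]; exact deriv_one' d hd_mul
  rw [hd_mul] at h0
  have h1 := congrArg (fun x => (↑W⁻¹ : R) * x) h0
  simp only [mul_add, mul_zero, ← mul_assoc, Units.inv_mul, one_mul] at h1
  exact eq_neg_of_add_eq_zero_right h1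

theorem extended_lattice_GD_x_flow_U_equation
    {R : Type*} [Ring R] (d δ : R → R)
    (hd_add : ∀ a b : R, d (a + b) = d a + d b)
    (hd_mul : ∀ a b : R, d (a * b) = d a * b + a * d b)
    (hδ_add : ∀ a b : R, δ (a + b) = δ a + δ b)
    (hδ_mul : ∀ a b : R, δ (a * b) = δ a * b + a * δ b)
    (Λ P : R) (W Wbar : Rˣ) (N k : ℕ) (hN : 0 < N) (hk : 0 < k)
    (hdW : d (W : R)
      = ((W : R) * Λ ^ (k * N) * (↑W⁻¹ : R)) * δ (W : R) + P * (W : R))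
    (hdWbar : d (Wbar : R)
      = ((W : R) * Λ ^ (k * N) * (↑W⁻¹ : R)) * δ (Wbar : R) + P * (Wbar : R)) :
    d ((↑W⁻¹ : R) * (Wbar : R)) = Λ ^ (k * N) * δ ((↑W⁻¹ : R) * (Wbar : R)) := by
  have hdinv := myDerivInv d hd_mul W
  have hδinv := myDerivInv δ hδ_mul W
  rw [hd_mul, hδ_mul, hdinv, hδinv, hdW, hdWbar]
  have hWiW : (↑W⁻¹ : R) * (W : R) = 1 := Units.inv_mul W
  simp only [mul_add, add_mul, neg_mul, mul_neg, neg_neg, ← mul_assoc,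
    Units.inv_mul, one_mul, Units.mul_inv_cancel_right, Units.inv_mul_cancel_right]
  abel
end
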